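/- Let G be a connected finite simple graph of order n₁ and let H be a connected finite simple graph of order n₂ ≥ 2, of diameter two, with maximum degree Δ. If Δ ≤ n₂ − 2 or n₁ ≥ 2, then dim_s(G ⊙ H) = (n₁ − 1)·n₂ + dim_s(H). -/

import Mathlib

/-!
Every path from outside the `a`-th copy of `H` into it passes through `a`, so all distances in
`G ⊙ H` are explicit; as `H` has diameter two, distances inside a copy are those of `H`.
Two vertices of different copies are then strongly resolved only by themselves, hence a strong
resolving set contains every copy but at most one entirely, and meets the remaining copy in a
strong resolving set of `H`. Conversely, all copies but one, together with a minimum strong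
resolving set `T` of `H` placed in the last copy `H_a`, strongly resolve `G ⊙ H`. The only
delicate pair is `a` with a vertex `k ∉ T` of `H_a`: it is resolved by a vertex of another
copy when `n₁ ≥ 2`, and otherwise, when `Δ ≤ n₂ - 2`, by a vertex of `T` at distance two
from `k`.
-/

open SimpleGraph

/-- A vertex `w` strongly resolves the pair `u`, `v` if `v` lies on some shortest `u`–`w`
path or `u` lies on some shortest `v`–`w` path. -/
def StronglyResolves {V : Type*} (G : SimpleGraph V) (w u v : V) : Prop :=
  G.dist u w = G.dist u v + G.dist v w ∨ G.dist v w = G.dist v u + G.dist u w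

/-- `S` is a strong resolving set for `G` if every pair of distinct vertices is strongly
resolved by some vertex of `S`. -/
def IsStrongResolvingSet {V : Type*} (G : SimpleGraph V) (S : Set V) : Prop :=
  ∀ u v : V, u ≠ v → ∃ w ∈ S, StronglyResolves G w u v

/-- The strong metric dimension: the minimum cardinality of a strong resolving set. -/
noncomputable def strongDim {V : Type*} (G : SimpleGraph V) [Fintype V] : ℕ :=
  sInf {k | ∃ S : Finset V, IsStrongResolvingSet G ↑S ∧ S.card = k}

/-- The closed neighborhood of a vertex. -/
def closedNbhd {V : Type*} (G : SimpleGraph V) (v : V) : Set V :=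
  insert v (G.neighborSet v)

/-- A twin-free clique: a clique containing no pair of true twins. -/
def IsTwinFreeClique {V : Type*} (G : SimpleGraph V) (X : Finset V) : Prop :=
  G.IsClique ↑X ∧ ∀ u ∈ X, ∀ v ∈ X, u ≠ v → closedNbhd G u ≠ closedNbhd G v

/-- The twin-free clique number: maximum cardinality of a twin-free clique. -/
noncomputable def twinFreeCliqueNum {V : Type*} (G : SimpleGraph V) [Fintype V] : ℕ :=
  sSup {k | ∃ X : Finset V, IsTwinFreeClique G X ∧ X.card = k}

/-- Adjacency relation of the join of two graphs. -/
def joinAdj {V W : Type*} (G : SimpleGraph V) (H : SimpleGraph W) :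
    V ⊕ W → V ⊕ W → Prop
  | Sum.inl a, Sum.inl b => G.Adj a b
  | Sum.inr a, Sum.inr b => H.Adj a b
  | Sum.inl _, Sum.inr _ => True
  | Sum.inr _, Sum.inl _ => True

/-- The join `G + H`: disjoint union of `G` and `H` plus all edges between them. -/
def joinGraph {V W : Type*} (G : SimpleGraph V) (H : SimpleGraph W) :
    SimpleGraph (V ⊕ W) where
  Adj := joinAdj G H
  symm := by
    constructor
    rintro (a | a) (b | b) h
    · exact G.adj_symm h
    · trivial
    · trivial
    · exact H.adj_symm h
  loopless := by
    constructor
    rintro (a | a) h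
    · exact G.irrefl h
    · exact H.irrefl h

/-- Adjacency relation of the corona product `G ⊙ H`. -/
def coronaAdj {V W : Type*} (G : SimpleGraph V) (H : SimpleGraph W) :
    V ⊕ V × W → V ⊕ V × W → Prop
  | Sum.inl a, Sum.inl b => G.Adj a b
  | Sum.inr p, Sum.inr q => p.1 = q.1 ∧ H.Adj p.2 q.2
  | Sum.inl a, Sum.inr q => a = q.1
  | Sum.inr p, Sum.inl b => p.1 = b

/-- The corona product `G ⊙ H`: one copy of `G` and one copy of `H` for each vertex of
`G`, with the `i`-th vertex of `G` joined to every vertex of the `i`-th copy of `H`. -/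
def corona {V W : Type*} (G : SimpleGraph V) (H : SimpleGraph W) :
    SimpleGraph (V ⊕ V × W) where
  Adj := coronaAdj G H
  symm := by
    constructor
    rintro (a | p) (b | q) h
    · exact G.adj_symm h
    · exact h.symm
    · exact h.symm
    · exact ⟨h.1.symm, H.adj_symm h.2⟩
  loopless := by
    constructor
    rintro (a | p) h
    · exact G.irrefl h
    · exact H.irrefl h.2

/-- The disjoint union of copies of `H`, one copy for each element of `V`. -/
def copies (V : Type*) {W : Type*} (H : SimpleGraph W) : SimpleGraph (V × W) where
  Adj p q := p.1 = q.1 ∧ H.Adj p.2 q.2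
  symm := ⟨fun _ _ h => ⟨h.1.symm, h.2.symm⟩⟩
  loopless := ⟨fun p h => H.irrefl h.2⟩

/-- The algebraic connectivity: the second smallest eigenvalue (with multiplicity,
in nondecreasing order) of the Laplacian matrix. -/
noncomputable def algebraicConnectivity {V : Type*} (G : SimpleGraph V) [Fintype V]
    [DecidableEq V] [DecidableRel G.Adj] : ℝ :=
  (((Finset.univ.val.map ((G.posSemidef_lapMatrix ℝ).isHermitian.eigenvalues)).sort
    (· ≤ ·)).getD 1 0)

open Sum

section StrongResolving

variable {α : Type*} {G : SimpleGraph α}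

theorem exists_stronglyResolves_of_mem_or_mem {S : Set α} {u v : α} (h : u ∈ S ∨ v ∈ S) :
    ∃ w ∈ S, StronglyResolves G w u v := by
  rcases h with hu | hv
  · exact ⟨u, hu, Or.inr (by simp)⟩
  · exact ⟨v, hv, Or.inl (by simp)⟩

theorem not_stronglyResolves_of_dist_eq (hG : G.Connected) {w u v : α} (huv : u ≠ v)
    (h : G.dist u w = G.dist v w) : ¬ StronglyResolves G w u v := by
  have := hG.pos_dist_of_ne huv
  have := dist_comm (G := G) (u := u) (v := v)
  unfold StronglyResolves
  omega

theorem strongDim_le_card [Fintype α] {S : Finset α} (hS : IsStrongResolvingSet G S) :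
    strongDim G ≤ S.card :=
  Nat.sInf_le ⟨S, hS, rfl⟩

theorem exists_isStrongResolvingSet_card_eq_strongDim [Fintype α] (G : SimpleGraph α) :
    ∃ S : Finset α, IsStrongResolvingSet G S ∧ S.card = strongDim G :=
  Nat.sInf_mem (s := {k | ∃ S : Finset α, IsStrongResolvingSet G S ∧ S.card = k})
    ⟨_, Finset.univ, fun _ _ _ => exists_stronglyResolves_of_mem_or_mem (by simp), rfl⟩

theorem IsStrongResolvingSet.exists_dist_eq_two {T : Set α} (hT : IsStrongResolvingSet G T)
    (hG : G.Connected) (hd2 : ∀ x y, G.dist x y ≤ 2) {v x : α} (hv : v ∉ T) (hxv : x ≠ v)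
    (hvx : ¬ G.Adj v x) : ∃ t ∈ T, G.dist v t = 2 := by
  obtain ⟨t, ht, hres⟩ := hT v x hxv.symm
  refine ⟨t, ht, ?_⟩
  have hvx1 : G.dist v x ≠ 1 := fun h => hvx (dist_eq_one_iff_adj.1 h)
  have := hG.pos_dist_of_ne hxv.symm
  have := hG.pos_dist_of_ne (u := v) (v := t) (by rintro rfl; exact hv ht)
  have := hd2 v x
  have := hd2 v t
  have := hd2 x t
  have := dist_comm (G := G) (u := x) (v := v)
  unfold StronglyResolves at hres
  omega

theorem exists_ne_not_adj_of_maxDegree_le [Fintype α] [DecidableRel G.Adj]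
    (hΔ : G.maxDegree ≤ Fintype.card α - 2) (hcard : 2 ≤ Fintype.card α) (v : α) :
    ∃ x, x ≠ v ∧ ¬ G.Adj v x := by
  classical
  have hlt : (G.neighborFinset v).card < (Finset.univ.erase v).card := by
    rw [card_neighborFinset_eq_degree, Finset.card_erase_of_mem (Finset.mem_univ v),
      Finset.card_univ]
    have := G.degree_le_maxDegree v
    omega
  obtain ⟨x, hx, hxv⟩ := Finset.exists_mem_notMem_of_card_lt_card hlt
  exact ⟨x, (Finset.mem_erase.1 hx).1, by simpa using hxv⟩

end StrongResolving

section Distance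

variable {α β : Type*} {G : SimpleGraph α}

theorem SimpleGraph.Hom.dist_le {G' : SimpleGraph β} (f : G →g G') {u v : α}
    (h : G.Reachable u v) : G'.dist (f u) (f v) ≤ G.dist u v := by
  obtain ⟨p, hp⟩ := h.exists_walk_length_eq_dist
  calc G'.dist (f u) (f v) ≤ (p.map f).length := SimpleGraph.dist_le _
    _ = G.dist u v := by rw [Walk.length_map, hp]

theorem SimpleGraph.Adj.dist_le_dist_add_one {u v : α} (h : G.Adj u v) (w : α) :
    G.dist u w ≤ G.dist v w + 1 := by
  have := h.reachable.dist_triangle_left w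
  rwa [dist_eq_one_iff_adj.2 h, add_comm] at this

theorem le_dist_of_le_add_one_of_adj {f : α → α → ℕ} (hf0 : ∀ x, f x x = 0)
    (hf : ∀ x y z, G.Adj x y → f x z ≤ f y z + 1) {u v : α} (h : G.Reachable u v) :
    f u v ≤ G.dist u v := by
  obtain ⟨p, hp⟩ := h.exists_walk_length_eq_dist
  rw [← hp]
  clear hp h
  induction p with
  | nil => simp [hf0]
  | cons hadj _ ih => exact (hf _ _ _ hadj).trans (by simpa using ih)

end Distance

section Corona

variable {V W : Type*} {G : SimpleGraph V} {H : SimpleGraph W}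

variable (G H) in
def coronaInl : G →g corona G H := ⟨inl, fun h => h⟩

variable (G H) in
def coronaInr (a : V) : H →g corona G H := ⟨fun k => inr (a, k), fun h => ⟨rfl, h⟩⟩

theorem corona_adj_inl_inr (a : V) (k : W) : (corona G H).Adj (inl a) (inr (a, k)) := rfl

theorem corona_connected (hG : G.Connected) : (corona G H).Connected := by
  have hinl : ∀ a b, (corona G H).Reachable (inl a) (inl b) :=
    fun a b => (hG a b).map (coronaInl G H)
  refine (connected_iff_exists_forall_reachable _).2 ⟨inl hG.nonempty.some, ?_⟩
  rintro (b | ⟨b, k⟩)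
  · exact hinl _ _
  · exact (hinl _ b).trans (corona_adj_inl_inr b k).reachable

theorem dist_corona_inl_inr_self (a : V) (k : W) : (corona G H).dist (inl a) (inr (a, k)) = 1 :=
  dist_eq_one_iff_adj.2 (corona_adj_inl_inr a k)

-- Inside one copy of `H`, the detour through its vertex of `G` has length two.
variable (G H) in
open scoped Classical in
noncomputable def coronaDist : V ⊕ V × W → V ⊕ V × W → ℕ
  | inl a, inl b => G.dist a b
  | inl a, inr q => G.dist a q.1 + 1
  | inr p, inl b => G.dist p.1 b + 1
  | inr p, inr q => if p.1 = q.1 then min (H.dist p.2 q.2) 2 else G.dist p.1 q.1 + 2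

theorem coronaDist_self (x : V ⊕ V × W) : coronaDist G H x x = 0 := by
  rcases x with a | ⟨a, k⟩ <;> simp [coronaDist]

theorem coronaDist_le_add_one_of_adj {x y : V ⊕ V × W} (hxy : (corona G H).Adj x y)
    (z : V ⊕ V × W) : coronaDist G H x z ≤ coronaDist G H y z + 1 := by
  rcases x with a | ⟨a, h⟩ <;> rcases y with b | ⟨b, k⟩ <;> rcases z with c | ⟨c, m⟩ <;>
    simp only [corona, coronaAdj] at hxy
  · simpa [coronaDist] using hxy.dist_le_dist_add_one c
  · simpa [coronaDist] using hxy.dist_le_dist_add_one c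
  · subst hxy; simp only [coronaDist]; omega
  · subst hxy; by_cases hac : a = c <;> simp [coronaDist, hac]
  · subst hxy; simp [coronaDist]
  · subst hxy; by_cases hac : a = c <;> simp [coronaDist, hac]
  · obtain ⟨rfl, -⟩ := hxy; simp [coronaDist]
  · obtain ⟨rfl, hhk⟩ := hxy
    by_cases hac : a = c
    · have := hhk.dist_le_dist_add_one m
      simp only [coronaDist, hac, if_true]
      omega
    · simp [coronaDist, hac]

theorem dist_corona_le_coronaDist (hG : G.Connected) (hH : H.Connected) (x y : V ⊕ V × W) :
    (corona G H).dist x y ≤ coronaDist G H x y := by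
  have hC := corona_connected (H := H) hG
  have hinl (a b : V) : (corona G H).dist (inl a) (inl b) ≤ G.dist a b :=
    (coronaInl G H).dist_le (hG a b)
  have hinr (a b : V) (k : W) : (corona G H).dist (inl a) (inr (b, k)) ≤ G.dist a b + 1 :=
    calc _ ≤ (corona G H).dist (inl a) (inl b) + (corona G H).dist (inl b) (inr (b, k)) :=
          hC.dist_triangle
      _ ≤ G.dist a b + 1 := by
          rw [dist_corona_inl_inr_self]; exact Nat.add_le_add_right (hinl a b) 1
  rcases x with a | ⟨a, h⟩ <;> rcases y with b | ⟨b, k⟩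
  · exact hinl a b
  · exact hinr a b k
  · rw [SimpleGraph.dist_comm]; simpa [coronaDist, SimpleGraph.dist_comm] using hinr b a h
  · have hvia : (corona G H).dist (inr (a, h)) (inr (b, k)) ≤ G.dist a b + 2 :=
      calc _ ≤ (corona G H).dist (inr (a, h)) (inl a) +
              (corona G H).dist (inl a) (inr (b, k)) := hC.dist_triangle
        _ ≤ G.dist a b + 2 := by
          rw [SimpleGraph.dist_comm, dist_corona_inl_inr_self]; linarith [hinr a b k]
    by_cases hab : a = b
    · subst hab
      simp only [coronaDist, if_true]
      refine le_min ((coronaInr G H a).dist_le (hH h k)) ?_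
      simpa using hvia
    · simpa [coronaDist, hab] using hvia

theorem dist_corona (hG : G.Connected) (hH : H.Connected) (x y : V ⊕ V × W) :
    (corona G H).dist x y = coronaDist G H x y :=
  le_antisymm (dist_corona_le_coronaDist hG hH x y) <|
    le_dist_of_le_add_one_of_adj coronaDist_self
      (fun _ _ z hxy => coronaDist_le_add_one_of_adj hxy z) (corona_connected hG x y)

theorem dist_corona_inr_eq_dist_inl_add_one (hG : G.Connected) (hH : H.Connected)
    {x : V ⊕ V × W} {a : V} (hx : ∀ k, x ≠ inr (a, k)) (k : W) :
    (corona G H).dist x (inr (a, k)) = (corona G H).dist x (inl a) + 1 := by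
  rw [dist_corona hG hH, dist_corona hG hH]
  rcases x with b | ⟨b, h⟩
  · rfl
  · have hba : b ≠ a := by rintro rfl; exact hx h rfl
    simp [coronaDist, hba]

theorem dist_corona_inr_inr (hG : G.Connected) (hH : H.Connected)
    (hd2 : ∀ x y, H.dist x y ≤ 2) (a : V) (x y : W) :
    (corona G H).dist (inr (a, x)) (inr (a, y)) = H.dist x y := by
  simp [dist_corona hG hH, coronaDist, hd2]

theorem corona_stronglyResolves_inr_self_inl (hG : G.Connected) (hH : H.Connected)
    {x : V ⊕ V × W} {a : V} (hx : ∀ k, x ≠ inr (a, k)) (k : W) :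
    StronglyResolves (corona G H) (inr (a, k)) x (inl a) :=
  Or.inl (by rw [dist_corona_inr_eq_dist_inl_add_one hG hH hx, dist_corona_inl_inr_self])

theorem corona_stronglyResolves_inr_inl (hG : G.Connected) (hH : H.Connected)
    {w : V ⊕ V × W} {a : V} (hw : ∀ k, w ≠ inr (a, k)) (k : W) :
    StronglyResolves (corona G H) w (inr (a, k)) (inl a) := by
  refine Or.inl ?_
  rw [SimpleGraph.dist_comm, dist_corona_inr_eq_dist_inl_add_one hG hH hw,
    SimpleGraph.dist_comm (u := inr (a, k)), dist_corona_inl_inr_self, SimpleGraph.dist_comm,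
    add_comm]

theorem corona_stronglyResolves_inr_iff (hG : G.Connected) (hH : H.Connected)
    (hd2 : ∀ x y, H.dist x y ≤ 2) (a : V) (t x y : W) :
    StronglyResolves (corona G H) (inr (a, t)) (inr (a, x)) (inr (a, y)) ↔
      StronglyResolves H t x y := by
  simp only [StronglyResolves, dist_corona_inr_inr hG hH hd2]

/-- A geodesic from outside the `a`-th copy of `H` enters it through `inl a`, so after passing
through `inr (a, y)` it cannot leave the copy again. -/
theorem eq_of_corona_dist_eq_dist_add_dist (hG : G.Connected) (hH : H.Connected)
    {u w : V ⊕ V × W} {a : V} {y : W} (hu : ∀ k, u ≠ inr (a, k))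
    (h : (corona G H).dist u w =
      (corona G H).dist u (inr (a, y)) + (corona G H).dist (inr (a, y)) w) :
    w = inr (a, y) := by
  have hC := corona_connected (H := H) hG
  rw [dist_corona_inr_eq_dist_inl_add_one hG hH hu] at h
  by_cases hw : ∃ m, w = inr (a, m)
  · obtain ⟨m, rfl⟩ := hw
    rw [dist_corona_inr_eq_dist_inl_add_one hG hH hu] at h
    exact (hC.dist_eq_zero_iff.1 (by omega)).symm
  · push Not at hw
    have htri : (corona G H).dist u w ≤
        (corona G H).dist u (inl a) + (corona G H).dist (inl a) w := hC.dist_triangle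
    rw [SimpleGraph.dist_comm (u := inr (a, y)), dist_corona_inr_eq_dist_inl_add_one hG hH hw,
      SimpleGraph.dist_comm (u := w)] at h
    omega

theorem corona_eq_or_eq_of_stronglyResolves_inr_inr (hG : G.Connected) (hH : H.Connected)
    {w : V ⊕ V × W} {a b : V} {x y : W} (hab : a ≠ b)
    (h : StronglyResolves (corona G H) w (inr (a, x)) (inr (b, y))) :
    w = inr (a, x) ∨ w = inr (b, y) := by
  rcases h with h | h
  · exact Or.inr (eq_of_corona_dist_eq_dist_add_dist hG hH (by simp [hab]) h)
  · exact Or.inl (eq_of_corona_dist_eq_dist_add_dist hG hH (by simp [hab.symm]) h)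

theorem IsStrongResolvingSet.corona_copy (hG : G.Connected) (hH : H.Connected)
    (hd2 : ∀ x y, H.dist x y ≤ 2) {S : Set (V ⊕ V × W)}
    (hS : IsStrongResolvingSet (corona G H) S) (a : V) :
    IsStrongResolvingSet H {t | inr (a, t) ∈ S} := by
  intro x y hxy
  obtain ⟨w, hwS, hres⟩ := hS (inr (a, x)) (inr (a, y)) (by simpa using hxy)
  by_cases hw : ∃ t, w = inr (a, t)
  · obtain ⟨t, rfl⟩ := hw
    exact ⟨t, hwS, (corona_stronglyResolves_inr_iff hG hH hd2 a t x y).1 hres⟩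
  · push Not at hw
    refine absurd hres (not_stronglyResolves_of_dist_eq (corona_connected hG) (by simpa) ?_)
    rw [SimpleGraph.dist_comm (u := inr (a, x)), SimpleGraph.dist_comm (u := inr (a, y)),
      dist_corona_inr_eq_dist_inl_add_one hG hH hw, dist_corona_inr_eq_dist_inl_add_one hG hH hw]

theorem IsStrongResolvingSet.exists_forall_ne_inr_mem (hG : G.Connected) (hH : H.Connected)
    {S : Set (V ⊕ V × W)} (hS : IsStrongResolvingSet (corona G H) S) :
    ∃ a, ∀ b ≠ a, ∀ k, inr (b, k) ∈ S := by
  by_cases hfull : ∀ b k, inr (b, k) ∈ S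
  · exact ⟨hG.nonempty.some, fun b _ k => hfull b k⟩
  push Not at hfull
  obtain ⟨a, x, hx⟩ := hfull
  refine ⟨a, fun b hb k => ?_⟩
  obtain ⟨w, hwS, hres⟩ := hS (inr (b, k)) (inr (a, x)) (by simp [hb])
  rcases corona_eq_or_eq_of_stronglyResolves_inr_inr hG hH hb hres with rfl | rfl
  · exact hwS
  · exact absurd hwS hx

end Corona

section CoronaSet

variable {V W : Type*} [Fintype V] [Fintype W] {G : SimpleGraph V} {H : SimpleGraph W}

variable [DecidableEq V] [DecidableEq W]

def coronaSet (a : V) (T : Finset W) : Finset (V ⊕ V × W) :=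
  ((Finset.univ.erase a ×ˢ Finset.univ) ∪ ({a} ×ˢ T)).map Function.Embedding.inr

@[simp]
theorem inl_notMem_coronaSet (a b : V) (T : Finset W) : inl b ∉ coronaSet a T := by
  simp [coronaSet]

@[simp]
theorem inr_mem_coronaSet {a b : V} {T : Finset W} {k : W} :
    inr (b, k) ∈ coronaSet a T ↔ b ≠ a ∨ k ∈ T := by
  simp only [coronaSet, Finset.mem_map, Function.Embedding.inr_apply, inr.injEq,
    exists_eq_right, Finset.mem_union, Finset.mem_product, Finset.mem_erase,
    Finset.mem_univ, Finset.mem_singleton]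
  tauto

theorem card_coronaSet (a : V) (T : Finset W) :
    (coronaSet a T).card = (Fintype.card V - 1) * Fintype.card W + T.card := by
  rw [coronaSet, Finset.card_map, Finset.card_union_of_disjoint, Finset.card_product,
    Finset.card_product, Finset.card_erase_of_mem (Finset.mem_univ a), Finset.card_univ,
    Finset.card_univ, Finset.card_singleton, one_mul]
  simp +contextual [Finset.disjoint_left, eq_comm]

theorem exists_stronglyResolves_coronaSet_inr_inl (hG : G.Connected) (hH : H.Connected)
    (hd2 : ∀ x y, H.dist x y ≤ 2) {T : Finset W}
    (hfar : Nontrivial V ∨ ∀ k ∉ T, ∃ t ∈ T, H.dist k t = 2) (a₀ a b : V) (k : W) :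
    ∃ w ∈ (coronaSet a₀ T : Set (V ⊕ V × W)),
      StronglyResolves (corona G H) w (inr (b, k)) (inl a) := by
  by_cases hmem : inr (b, k) ∈ coronaSet a₀ T
  · exact exists_stronglyResolves_of_mem_or_mem (Or.inl hmem)
  obtain ⟨rfl, hk⟩ : b = a₀ ∧ k ∉ T := by simpa using hmem
  by_cases hab : a = b
  · subst hab
    rcases hfar with hV | hfar
    · obtain ⟨c, hc⟩ := exists_ne a
      exact ⟨inr (c, k), by simp [hc], corona_stronglyResolves_inr_inl hG hH (by simp [hc]) k⟩
    · obtain ⟨t, ht, hkt⟩ := hfar k hk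
      refine ⟨inr (a, t), by simp [ht], Or.inl ?_⟩
      rw [dist_corona_inr_inr hG hH hd2, hkt, SimpleGraph.dist_comm,
        dist_corona_inl_inr_self, dist_corona_inl_inr_self]
  · exact ⟨inr (a, k), by simp [hab],
      corona_stronglyResolves_inr_self_inl hG hH (by simp [Ne.symm hab]) k⟩

theorem isStrongResolvingSet_coronaSet (hG : G.Connected) (hH : H.Connected)
    (hd2 : ∀ x y, H.dist x y ≤ 2) {T : Finset W} (hT : IsStrongResolvingSet H T)
    (hfar : Nontrivial V ∨ ∀ k ∉ T, ∃ t ∈ T, H.dist k t = 2) (a₀ : V) :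
    IsStrongResolvingSet (corona G H) (coronaSet a₀ T) := by
  obtain ⟨k₀⟩ := hH.nonempty
  rintro (a | ⟨a, x⟩) (b | ⟨b, y⟩) hne
  · have hab : a ≠ b := by simpa using hne
    by_cases hb : b = a₀
    · subst hb
      exact ⟨inr (a, k₀), by simp [hab],
        (corona_stronglyResolves_inr_self_inl hG hH (x := inl b) (by simp) k₀).symm⟩
    · exact ⟨inr (b, k₀), by simp [hb],
        corona_stronglyResolves_inr_self_inl hG hH (by simp) k₀⟩
  · obtain ⟨w, hw, hres⟩ :=
      exists_stronglyResolves_coronaSet_inr_inl hG hH hd2 hfar a₀ a b y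
    exact ⟨w, hw, hres.symm⟩
  · exact exists_stronglyResolves_coronaSet_inr_inl hG hH hd2 hfar a₀ b a x
  · by_cases hab : a = b ∧ a = a₀
    · obtain ⟨rfl, rfl⟩ := hab
      obtain ⟨t, ht, hres⟩ := hT x y (by simpa using hne)
      exact ⟨inr (a, t), by simpa using ht,
        (corona_stronglyResolves_inr_iff hG hH hd2 a t x y).2 hres⟩
    · refine exists_stronglyResolves_of_mem_or_mem ?_
      by_cases ha : a = a₀
      · exact Or.inr (by simp [← ha, Ne.symm (fun h => hab ⟨h, ha⟩)])
      · exact Or.inl (by simp [ha])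

end CoronaSet

theorem strongDim_corona_le {V W : Type*} [Fintype V] [Fintype W] {G : SimpleGraph V}
    {H : SimpleGraph W} (hG : G.Connected) (hH : H.Connected) (hd2 : ∀ x y, H.dist x y ≤ 2)
    (h : Nontrivial V ∨ ∀ v, ∃ x, x ≠ v ∧ ¬ H.Adj v x) :
    strongDim (corona G H) ≤ (Fintype.card V - 1) * Fintype.card W + strongDim H := by
  classical
  obtain ⟨T, hT, hTcard⟩ := exists_isStrongResolvingSet_card_eq_strongDim H
  have hfar : Nontrivial V ∨ ∀ k ∉ T, ∃ t ∈ T, H.dist k t = 2 :=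
    h.imp_right fun h k hk =>
      let ⟨_, hxk, hkx⟩ := h k
      hT.exists_dist_eq_two hH hd2 hk hxk hkx
  calc strongDim (corona G H) ≤ (coronaSet hG.nonempty.some T).card :=
        strongDim_le_card (isStrongResolvingSet_coronaSet hG hH hd2 hT hfar _)
    _ = _ := by rw [card_coronaSet, hTcard]

theorem le_strongDim_corona {V W : Type*} [Fintype V] [Fintype W] {G : SimpleGraph V}
    {H : SimpleGraph W} (hG : G.Connected) (hH : H.Connected) (hd2 : ∀ x y, H.dist x y ≤ 2) :
    (Fintype.card V - 1) * Fintype.card W + strongDim H ≤ strongDim (corona G H) := by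
  classical
  obtain ⟨S, hS, hScard⟩ := exists_isStrongResolvingSet_card_eq_strongDim (corona G H)
  obtain ⟨a, ha⟩ := hS.exists_forall_ne_inr_mem hG hH
  set T := Finset.univ.filter fun t => inr (a, t) ∈ S
  have hT : IsStrongResolvingSet H T := by simpa [T] using hS.corona_copy hG hH hd2 a
  have hsub : coronaSet a T ⊆ S := by
    rintro (b | ⟨b, k⟩) hz
    · simp at hz
    · by_cases hb : b = a
      · subst hb
        simpa [T] using hz
      · exact ha b hb k
  calc _ ≤ (coronaSet a T).card := by
        rw [card_coronaSet]; exact Nat.add_le_add_left (strongDim_le_card hT) _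
    _ ≤ S.card := Finset.card_le_card hsub
    _ = _ := hScard

/-- Let `G` be a connected graph of order `n₁` and `H` a connected graph
of order `n₂ ≥ 2`, of diameter two, with maximum degree `Δ`. If `Δ ≤ n₂ − 2` or
`n₁ ≥ 2`, then `dim_s(G ⊙ H) = (n₁ − 1)·n₂ + dim_s(H)`. -/
theorem strongDim_corona_of_diam_two {V W : Type*} [Fintype V] [Fintype W]
    (G : SimpleGraph V) (H : SimpleGraph W) [DecidableRel H.Adj]
    (hG : G.Connected) (hH : H.Connected) (hn2 : 2 ≤ Fintype.card W)
    (hdiam : H.diam = 2)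
    (h : H.maxDegree ≤ Fintype.card W - 2 ∨ 2 ≤ Fintype.card V) :
    strongDim (corona G H) =
      (Fintype.card V - 1) * Fintype.card W + strongDim H := by
  have hd2 : ∀ x y, H.dist x y ≤ 2 := fun _ _ =>
    hdiam ▸ dist_le_diam (ediam_ne_top_of_diam_ne_zero (by omega))
  refine le_antisymm (strongDim_corona_le hG hH hd2 ?_) (le_strongDim_corona hG hH hd2)
  rcases h with hΔ | hV
  · exact Or.inr (exists_ne_not_adj_of_maxDegree_le hΔ hn2)
  · exact Or.inl (Fintype.one_lt_card_iff_nontrivial.1 hV)
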